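/- arXiv:0904.3153 — 4 statements merged into one kernel-verified Lean document; each statement's English description precedes it below -/
import Mathlib

section
/- In the free associative ring \mathbb{Z}\langle x, y \rangle, for every l \geq 1 the symmetric standard polynomial s_l evaluated at the elements r_i = x y^{i+1}, i = 1,...,l, is nonzero: s_l(xy^2, xy^3, ..., xy^{l+1}) \neq 0. -/
/-!
Each term of `s_l(xy², …, xy^{l+1})` is `±` the monomial `x y^{σ 0 + 2} ⋯ x y^{σ (l-1) + 2}`.
The exponents can be read back from the word as the lengths of the runs of `y` between
consecutive `x`'s, so distinct permutations give distinct monomials. Monomials form a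
`ℤ`-basis of `ℤ⟨x, y⟩` and every coefficient is a sign `±1`, so the sum is nonzero.
-/

/-- The standard (symmetric alternating) polynomial
`s_m(x_1,…,x_m) = ∑_{σ ∈ S_m} sgn σ · x_{σ(1)} ⋯ x_{σ(m)}`. -/
def stdPoly {R : Type*} [Ring R] (m : ℕ) (x : Fin m → R) : R :=
  ∑ σ : Equiv.Perm (Fin m), (Equiv.Perm.sign σ : ℤ) • (List.ofFn (fun i => x (σ i))).prod

theorem List.replicate_append_inj {α : Type*} {b : α} {k k' : ℕ} {l l' : List α}
    (hl : l.head? ≠ some b) (hl' : l'.head? ≠ some b)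
    (h : replicate k b ++ l = replicate k' b ++ l') : k = k' ∧ l = l' := by
  induction k generalizing k' with
  | zero =>
    cases k' with
    | zero => exact ⟨rfl, h⟩
    | succ k' =>
      rw [replicate_zero, nil_append] at h
      simp [h, replicate_succ] at hl
  | succ k ih =>
    cases k' with
    | zero =>
      rw [replicate_zero, nil_append] at h
      simp [← h, replicate_succ] at hl'
    | succ k' =>
      simp only [replicate_succ, cons_append, cons.injEq, true_and] at h
      obtain ⟨rfl, rfl⟩ := ih h
      exact ⟨rfl, rfl⟩

namespace FreeAbelianGroup

theorem coe_basis (α : Type*) : ⇑(FreeAbelianGroup.basis α) = of := by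
  ext a
  simp [FreeAbelianGroup.basis]

theorem linearIndependent_of (α : Type*) : LinearIndependent ℤ (of : α → FreeAbelianGroup α) :=
  coe_basis α ▸ (FreeAbelianGroup.basis α).linearIndependent

theorem sum_zsmul_of_ne_zero {ι α : Type*} [Fintype ι] {w : ι → α} (hw : w.Injective)
    {c : ι → ℤ} (hc : c ≠ 0) : ∑ i, c i • of (w i) ≠ 0 := fun h =>
  hc <| funext <| Fintype.linearIndependent_iff.mp ((linearIndependent_of α).comp w hw) c h

end FreeAbelianGroup

namespace FreeMonoid

variable {α : Type*}

def blockWord (a b : α) (ks : List ℕ) : FreeMonoid α :=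
  (ks.map fun k => of a * of b ^ k).prod

theorem toList_pow_of (b : α) (k : ℕ) : toList (of b ^ k) = List.replicate k b := by
  induction k with
  | zero => rfl
  | succ k ih => rw [pow_succ', toList_mul, ih, List.replicate_succ]; rfl

theorem toList_blockWord_cons (a b : α) (k : ℕ) (ks : List ℕ) :
    toList (blockWord a b (k :: ks)) = a :: (List.replicate k b ++ toList (blockWord a b ks)) := by
  simp [blockWord, toList_pow_of]

theorem head?_toList_blockWord_ne {a b : α} (hab : a ≠ b) (ks : List ℕ) :
    (toList (blockWord a b ks)).head? ≠ some b := by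
  cases ks with
  | nil => simp [blockWord]
  | cons k ks => simpa [toList_blockWord_cons] using hab

theorem blockWord_injective {a b : α} (hab : a ≠ b) : (blockWord a b).Injective := by
  intro ks ks' h
  induction ks generalizing ks' with
  | nil =>
    cases ks' with
    | nil => rfl
    | cons k' ks' => simpa [blockWord] using congrArg toList h
  | cons k ks ih =>
    cases ks' with
    | nil => simpa [blockWord] using congrArg toList h
    | cons k' ks' =>
      have h := congrArg toList h
      simp only [toList_blockWord_cons, List.cons.injEq, true_and] at h
      obtain ⟨rfl, htail⟩ := List.replicate_append_inj
        (head?_toList_blockWord_ne hab ks) (head?_toList_blockWord_ne hab ks') h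
      rw [ih (toList.injective htail)]

end FreeMonoid

theorem FreeRing.prod_map_of_mul_of_pow {α : Type*} (a b : α) (ks : List ℕ) :
    (ks.map fun k => of a * of b ^ k).prod = FreeAbelianGroup.of (FreeMonoid.blockWord a b ks) := by
  rw [FreeMonoid.blockWord, ← FreeAbelianGroup.ofMulHom_coe, map_list_prod, List.map_map]
  refine congrArg List.prod (List.map_congr_left fun k _ => ?_)
  rw [Function.comp_apply, map_mul, map_pow]
  rfl

theorem stdPoly_ne_zero_freeRing_general (l : ℕ) :
    stdPoly l (fun i : Fin l =>
        (FreeRing.of true) * (FreeRing.of false : FreeRing Bool) ^ ((i : ℕ) + 2)) ≠ 0 := by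
  set w : Equiv.Perm (Fin l) → FreeMonoid Bool :=
    fun σ => FreeMonoid.blockWord true false (List.ofFn fun i => (σ i : ℕ) + 2)
  have hw : w.Injective := by
    refine (FreeMonoid.blockWord_injective (by decide : true ≠ false)).comp
      (List.ofFn_injective.comp fun σ τ h => Equiv.ext fun i => Fin.ext ?_)
    simpa using congrFun h i
  have hsign : (fun σ : Equiv.Perm (Fin l) => (Equiv.Perm.sign σ : ℤ)) ≠ 0 :=
    fun h => by simpa using congrFun h 1
  have hprod (σ : Equiv.Perm (Fin l)) :
      (List.ofFn fun i => FreeRing.of true * FreeRing.of false ^ ((σ i : ℕ) + 2)).prod =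
        FreeAbelianGroup.of (w σ) := by
    rw [← FreeRing.prod_map_of_mul_of_pow, List.map_ofFn]
    rfl
  simp only [stdPoly, hprod]
  exact FreeAbelianGroup.sum_zsmul_of_ne_zero hw hsign

/-- In the free associative ring `ℤ⟨x,y⟩` (here `FreeRing Bool` with generators
`X = of true` and `Y = of false`), for every `l ≥ 1` the standard polynomial `s_l`
evaluated at `r_i = x·y^{i+1}` (`i = 1,…,l`) is nonzero. -/
theorem stdPoly_ne_zero_freeRing (l : ℕ) (hl : 1 ≤ l) :
    stdPoly l (fun i : Fin l =>
        (FreeRing.of true) * (FreeRing.of false : FreeRing Bool) ^ ((i : ℕ) + 2)) ≠ 0 :=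
  stdPoly_ne_zero_freeRing_general l
end

section
/- Let K be a field of characteristic 2 and define on V = K \times K the operations (a,b) + (c,d) = (a+c, ac+b+d) and (a,b) \times (c,d) = (ac, bc^2 + a^2 d). Then (V, +, \times) is a commutative associative ring with additive identity (0,0) and multiplicative identity (1,0). -/
/-- Twisted addition on `K × K`: `(a,b) + (c,d) = (a+c, ac+b+d)`. -/
def Vadd {K : Type*} [Field K] (v w : K × K) : K × K :=
  (v.1 + w.1, v.1 * w.1 + v.2 + w.2)

/-- Twisted multiplication on `K × K`: `(a,b) × (c,d) = (ac, bc² + a²d)`. -/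
def Vmul {K : Type*} [Field K] (v w : K × K) : K × K :=
  (v.1 * w.1, v.2 * w.1 ^ 2 + v.1 ^ 2 * w.2)

/-! Only distributivity needs characteristic 2: expanding `u × (v + w)` leaves the cross term
`2 u₂ v₁ w₁`, i.e. it is the additivity of the Frobenius `c ↦ c²`. -/

section TwistedRing

variable {K : Type*} [Field K]

theorem Vadd_assoc (u v w : K × K) : Vadd (Vadd u v) w = Vadd u (Vadd v w) := by
  ext <;> simp only [Vadd] <;> ring

theorem Vadd_comm (u v : K × K) : Vadd u v = Vadd v u := by
  ext <;> simp only [Vadd] <;> ring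

theorem zero_Vadd (v : K × K) : Vadd (0, 0) v = v := by
  ext <;> simp [Vadd]

theorem Vadd_neg_fst_sq_sub_snd (v : K × K) : Vadd v (-v.1, v.1 ^ 2 - v.2) = (0, 0) := by
  ext <;> simp only [Vadd] <;> ring

theorem Vmul_assoc (u v w : K × K) : Vmul (Vmul u v) w = Vmul u (Vmul v w) := by
  ext <;> simp only [Vmul] <;> ring

theorem Vmul_comm (u v : K × K) : Vmul u v = Vmul v u := by
  ext <;> simp only [Vmul] <;> ring

theorem one_Vmul (v : K × K) : Vmul (1, 0) v = v := by
  ext <;> simp [Vmul]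

theorem Vmul_Vadd [CharP K 2] (u v w : K × K) :
    Vmul u (Vadd v w) = Vadd (Vmul u v) (Vmul u w) := by
  ext
  · simp only [Vmul, Vadd]; ring
  · simp only [Vmul, Vadd, CharTwo.add_sq]
    ring

theorem Vadd_Vmul [CharP K 2] (u v w : K × K) :
    Vmul (Vadd u v) w = Vadd (Vmul u w) (Vmul v w) := by
  rw [Vmul_comm, Vmul_Vadd, Vmul_comm w, Vmul_comm w]

end TwistedRing

/-- For `K` a field of characteristic 2, `(K × K, Vadd, Vmul)` is a commutative
associative ring with additive identity `(0,0)` and multiplicative identity `(1,0)`. -/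
theorem twisted_ring_axioms {K : Type*} [Field K] (hK : ringChar K = 2) :
    (∀ u v w : K × K, Vadd (Vadd u v) w = Vadd u (Vadd v w)) ∧
    (∀ u v : K × K, Vadd u v = Vadd v u) ∧
    (∀ v : K × K, Vadd ((0 : K), (0 : K)) v = v) ∧
    (∀ v : K × K, ∃ w : K × K, Vadd v w = ((0 : K), (0 : K))) ∧
    (∀ u v w : K × K, Vmul (Vmul u v) w = Vmul u (Vmul v w)) ∧
    (∀ u v : K × K, Vmul u v = Vmul v u) ∧
    (∀ v : K × K, Vmul ((1 : K), (0 : K)) v = v) ∧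
    (∀ u v w : K × K, Vmul u (Vadd v w) = Vadd (Vmul u v) (Vmul u w)) ∧
    (∀ u v w : K × K, Vmul (Vadd u v) w = Vadd (Vmul u w) (Vmul v w)) := by
  have : CharP K 2 := ringChar.of_eq hK
  exact ⟨Vadd_assoc, Vadd_comm, zero_Vadd, fun v => ⟨_, Vadd_neg_fst_sq_sub_snd v⟩, Vmul_assoc,
    Vmul_comm, one_Vmul, Vmul_Vadd, Vadd_Vmul⟩
end

section
/- In the ring V = K \times K over a field K of characteristic 2 with operations (a,b)+(c,d) = (a+c, ac+b+d) and (a,b)\times(c,d) = (ac, bc^2 + a^2 d), the set I = \{(0,b) : b \in K\} is an ideal with I \cdot I = 0, and the quotient V/I is isomorphic as a ring to K. -/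
section TwistedRing

variable {K : Type*} [Field K] (v w : K × K)

@[simp]
theorem Vadd_fst : (Vadd v w).1 = v.1 + w.1 := rfl

@[simp]
theorem Vadd_snd : (Vadd v w).2 = v.1 * w.1 + v.2 + w.2 := rfl

@[simp]
theorem Vmul_fst : (Vmul v w).1 = v.1 * w.1 := rfl

@[simp]
theorem Vmul_snd : (Vmul v w).2 = v.2 * w.1 ^ 2 + v.1 ^ 2 * w.2 := rfl

theorem fst_eq_zero_iff_exists_eq_zero_prod : v.1 = 0 ↔ ∃ b : K, v = (0, b) :=
  ⟨fun hv => ⟨v.2, Prod.ext hv rfl⟩, fun ⟨_, hb⟩ => by simp [hb]⟩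

variable {v w}

theorem Vadd_zero_neg_snd_of_fst_eq_zero (hv : v.1 = 0) : Vadd v (0, -v.2) = (0, 0) := by
  ext <;> simp [hv]

theorem Vmul_eq_zero_of_fst_eq_zero (hv : v.1 = 0) (hw : w.1 = 0) : Vmul v w = (0, 0) := by
  ext <;> simp [hv, hw]

end TwistedRing

theorem twisted_ring_ideal_general {K : Type*} [Field K] :
    -- `I` is closed under addition and negation, and absorbs multiplication:
    (∀ v w : K × K, v.1 = 0 → w.1 = 0 → (Vadd v w).1 = 0) ∧
    (∀ v : K × K, v.1 = 0 → ∃ w : K × K, w.1 = 0 ∧ Vadd v w = ((0 : K), (0 : K))) ∧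
    (∀ v w : K × K, v.1 = 0 → (Vmul w v).1 = 0 ∧ (Vmul v w).1 = 0) ∧
    -- `I · I = 0`:
    (∀ v w : K × K, v.1 = 0 → w.1 = 0 → Vmul v w = ((0 : K), (0 : K))) ∧
    -- the quotient `V/I` is isomorphic to `K`, via the first projection:
    (∀ v w : K × K, (Vadd v w).1 = v.1 + w.1) ∧
    (∀ v w : K × K, (Vmul v w).1 = v.1 * w.1) ∧
    ((((1 : K), (0 : K)) : K × K).1 = 1) ∧
    (Function.Surjective (fun v : K × K => v.1)) ∧
    (∀ v : K × K, v.1 = 0 ↔ ∃ b : K, v = ((0 : K), b)) :=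
  ⟨fun v w hv hw => by simp [hv, hw],
    fun _ hv => ⟨_, rfl, Vadd_zero_neg_snd_of_fst_eq_zero hv⟩,
    fun v w hv => by simp [hv],
    fun _ _ => Vmul_eq_zero_of_fst_eq_zero,
    Vadd_fst, Vmul_fst, rfl,
    fun a => ⟨(a, 0), rfl⟩,
    fst_eq_zero_iff_exists_eq_zero_prod⟩

/-- In the twisted ring `V = K × K` over a field of characteristic 2, the set
`I = {(0,b) : b ∈ K}` is an ideal with `I · I = 0`, and `V/I ≅ K` as rings:
the first projection is a surjective ring homomorphism (for the twisted operations)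
whose kernel is exactly `I`. -/
theorem twisted_ring_ideal {K : Type*} [Field K] (hK : ringChar K = 2) :
    -- `I` is closed under addition and negation, and absorbs multiplication:
    (∀ v w : K × K, v.1 = 0 → w.1 = 0 → (Vadd v w).1 = 0) ∧
    (∀ v : K × K, v.1 = 0 → ∃ w : K × K, w.1 = 0 ∧ Vadd v w = ((0 : K), (0 : K))) ∧
    (∀ v w : K × K, v.1 = 0 → (Vmul w v).1 = 0 ∧ (Vmul v w).1 = 0) ∧
    -- `I · I = 0`:
    (∀ v w : K × K, v.1 = 0 → w.1 = 0 → Vmul v w = ((0 : K), (0 : K))) ∧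
    -- the quotient `V/I` is isomorphic to `K`, via the first projection:
    (∀ v w : K × K, (Vadd v w).1 = v.1 + w.1) ∧
    (∀ v w : K × K, (Vmul v w).1 = v.1 * w.1) ∧
    ((((1 : K), (0 : K)) : K × K).1 = 1) ∧
    (Function.Surjective (fun v : K × K => v.1)) ∧
    (∀ v : K × K, v.1 = 0 ↔ ∃ b : K, v = ((0 : K), b)) :=
  twisted_ring_ideal_general
end

section
/- In the ring V = K \times K over a field K of characteristic 2 with twisted addition (a,b)+(c,d)=(a+c, ac+b+d), every element (a,b) with a \neq 0 has additive order 4; in particular the additive group of V has exponent 4 and V does not admit a structure of an algebra over any field. -/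
/-- `n`-fold iterated twisted sum `n • v = v + v + ⋯ + v`. -/
def Vsmul {K : Type*} [Field K] : ℕ → K × K → K × K
  | 0, _ => ((0 : K), (0 : K))
  | n + 1, v => Vadd v (Vsmul n v)

section Twisted

variable {K : Type*} [Field K]

theorem Vsmul_fst (n : ℕ) (v : K × K) : (Vsmul n v).1 = n * v.1 := by
  induction n with
  | zero => simp [Vsmul]
  | succ n ih =>
    simp only [Vsmul, Vadd, ih]
    push_cast
    ring

theorem Vsmul_two (v : K × K) : Vsmul 2 v = (2 * v.1, v.1 ^ 2 + 2 * v.2) := by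
  simp only [Vsmul, Vadd, Prod.mk.injEq]
  constructor <;> ring

theorem Vsmul_four (v : K × K) : Vsmul 4 v = (4 * v.1, 6 * v.1 ^ 2 + 4 * v.2) := by
  simp only [Vsmul, Vadd, Prod.mk.injEq]
  constructor <;> ring

variable [CharP K 2]

theorem Vsmul_four_eq_zero (v : K × K) : Vsmul 4 v = ((0 : K), (0 : K)) := by
  have h2 : (2 : K) = 0 := CharTwo.two_eq_zero
  rw [Vsmul_four]
  congr 1
  · linear_combination 2 * v.1 * h2
  · linear_combination (3 * v.1 ^ 2 + 2 * v.2) * h2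

theorem Vsmul_ne_zero_of_odd {n : ℕ} (hn : Odd n) {v : K × K} (hv : v.1 ≠ 0) :
    Vsmul n v ≠ ((0 : K), (0 : K)) := by
  intro h
  have hn : (n : K) ≠ 0 := by
    rwa [Ne, CharP.cast_eq_zero_iff K 2, ← even_iff_two_dvd, Nat.not_even_iff_odd]
  exact mul_ne_zero hn hv (by rw [← Vsmul_fst, h])

theorem Vsmul_two_ne_zero {v : K × K} (hv : v.1 ≠ 0) : Vsmul 2 v ≠ ((0 : K), (0 : K)) := by
  intro h
  simp only [Vsmul_two, CharTwo.two_eq_zero, zero_mul, add_zero, Prod.mk.injEq] at h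
  exact hv (pow_eq_zero_iff two_ne_zero |>.mp h.2)

end Twisted

/-- In the twisted abelian group `V = K × K` over a field of characteristic 2, every
element `(a,b)` with `a ≠ 0` has additive order `4`; in particular the additive group
of `V` has exponent `4`, and `V` is not a vector space over any field: its additive
group is nontrivial torsion but has no prime exponent. -/
theorem twisted_ring_order_four {K : Type*} [Field K] (hK : ringChar K = 2) :
    (∀ a b : K, a ≠ 0 →
      Vsmul 4 ((a, b) : K × K) = ((0 : K), (0 : K)) ∧
      (∀ m : ℕ, 0 < m → m < 4 → Vsmul m ((a, b) : K × K) ≠ ((0 : K), (0 : K)))) ∧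
    (∀ v : K × K, Vsmul 4 v = ((0 : K), (0 : K))) ∧
    ¬ (∃ q : ℕ, q.Prime ∧ ∀ v : K × K, Vsmul q v = ((0 : K), (0 : K))) := by
  have := ringChar.of_eq hK
  refine ⟨fun a b ha => ⟨Vsmul_four_eq_zero _, fun m hm hm4 => ?_⟩, Vsmul_four_eq_zero, ?_⟩
  · interval_cases m
    exacts [Vsmul_ne_zero_of_odd odd_one ha, Vsmul_two_ne_zero ha,
      Vsmul_ne_zero_of_odd (by decide) ha]
  · rintro ⟨q, hq, hall⟩
    obtain rfl | hodd := hq.eq_two_or_odd'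
    · exact Vsmul_two_ne_zero one_ne_zero (hall (1, 0))
    · exact Vsmul_ne_zero_of_odd hodd one_ne_zero (hall (1, 0))
end
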